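/- Let G be a finite loopless directed graph on vertex set V with arc set A, let s, t ∈ V with s ≠ t, let k ≥ 1, and suppose that t has out-degree 0 in G. Define the undirected simple graph G' as follows: its vertices are two copies v' and v'' of every v ∈ V, together with k fresh vertices p_{a,1}, …, p_{a,k} for every arc a ∈ A; its edges are {v', v''} for every v ∈ V, and, for every arc a = (u, v) ∈ A, the k + 1 edges of the path u'', p_{a,1}, p_{a,2}, …, p_{a,k}, v'. Then the number of directed s,t-paths of length k in G equals the number of paths of length k(k+2) between s' and t' in G'. -/
import Mathlib


/-- The relation generating the undirected graph `G'` built from a directed graph with arc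
relation `A` and subdivision parameter `k`.  Vertices: `Sum.inl v` is the copy `v'`,
`Sum.inr (Sum.inl v)` is the copy `v''`, and `Sum.inr (Sum.inr (a, i))` is the `i`-th inner
vertex `p_{a,i+1}` of the length-`(k+1)` path replacing the arc `a`.  The relation records
the edges `{v', v''}`, `{u'', p_{a,1}}`, `{p_{a,i}, p_{a,i+1}}` and `{p_{a,k}, v'}`. -/
def arcPathRel {V : Type} (A : V → V → Prop) (k : ℕ) :
    (V ⊕ (V ⊕ ({p : V × V // A p.1 p.2} × Fin k))) →
    (V ⊕ (V ⊕ ({p : V × V // A p.1 p.2} × Fin k))) → Prop :=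
  fun x y =>
    match x, y with
    | Sum.inl v, Sum.inr (Sum.inl w) => v = w
    | Sum.inr (Sum.inl u), Sum.inr (Sum.inr (a, i)) => a.val.1 = u ∧ (i : ℕ) = 0
    | Sum.inr (Sum.inr (a, i)), Sum.inr (Sum.inr (b, j)) => a = b ∧ (i : ℕ) + 1 = (j : ℕ)
    | Sum.inr (Sum.inr (a, i)), Sum.inl v => a.val.2 = v ∧ (i : ℕ) = k - 1
    | _, _ => False

namespace Stmt13

abbrev ArcT {V : Type} (A : V → V → Prop) : Type := {p : V × V // A p.1 p.2}

abbrev Wt {V : Type} (A : V → V → Prop) (k : ℕ) : Type := V ⊕ (V ⊕ (ArcT A × Fin k))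

variable {V : Type} {A : V → V → Prop} {k : ℕ}

lemma adj_iff (x y : Wt A k) :
    (SimpleGraph.fromRel (arcPathRel A k)).Adj x y ↔
      x ≠ y ∧ (arcPathRel A k x y ∨ arcPathRel A k y x) :=
  SimpleGraph.fromRel_adj _ _ _

/-- neighbors of `v'` -/
lemma adj_inl {v : V} {y : Wt A k}
    (h : (SimpleGraph.fromRel (arcPathRel A k)).Adj (Sum.inl v) y) :
    y = Sum.inr (Sum.inl v) ∨
      ∃ (a : ArcT A) (i : Fin k), (i : ℕ) = k - 1 ∧ a.val.2 = v ∧ y = Sum.inr (Sum.inr (a, i)) := by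
  rw [adj_iff] at h
  obtain ⟨hne, h | h⟩ := h <;> rcases y with w | w | ⟨a, i⟩ <;>
    simp [arcPathRel] at h <;> tauto

/-- neighbors of `v''` -/
lemma adj_inrinl {v : V} {y : Wt A k}
    (h : (SimpleGraph.fromRel (arcPathRel A k)).Adj (Sum.inr (Sum.inl v)) y) :
    y = Sum.inl v ∨
      ∃ (a : ArcT A) (i : Fin k), (i : ℕ) = 0 ∧ a.val.1 = v ∧ y = Sum.inr (Sum.inr (a, i)) := by
  rw [adj_iff] at h
  obtain ⟨hne, h | h⟩ := h <;> rcases y with w | w | ⟨a, i⟩ <;>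
    simp [arcPathRel] at h <;> tauto

/-- neighbors of `p_{a,i}` -/
lemma adj_inner {a : ArcT A} {i : Fin k} {y : Wt A k}
    (h : (SimpleGraph.fromRel (arcPathRel A k)).Adj (Sum.inr (Sum.inr (a, i))) y) :
    ((i : ℕ) = 0 ∧ y = Sum.inr (Sum.inl a.val.1)) ∨
    ((i : ℕ) = k - 1 ∧ y = Sum.inl a.val.2) ∨
    (∃ j : Fin k, ((j : ℕ) = (i : ℕ) + 1 ∨ (j : ℕ) + 1 = (i : ℕ)) ∧
      y = Sum.inr (Sum.inr (a, j))) := by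
  rw [adj_iff] at h
  obtain ⟨hne, h | h⟩ := h <;> rcases y with w | w | ⟨b, j⟩ <;>
    simp [arcPathRel] at h
  · exact Or.inr (Or.inl ⟨h.2, by rw [h.1]⟩)
  · rcases h with ⟨rfl, h2⟩
    exact Or.inr (Or.inr ⟨j, Or.inl h2.symm, rfl⟩)
  · exact Or.inl ⟨h.2, by rw [h.1]⟩
  · rcases h with ⟨rfl, h2⟩
    exact Or.inr (Or.inr ⟨j, Or.inr h2, rfl⟩)


section Chains

variable {V : Type} {A : V → V → Prop} {k : ℕ} {t : V} {ww : ℕ → Wt A k}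

/-- a position holding an `inr` vertex is not the last one -/
lemma lt_of_inr (hN : ww (k*(k+2)) = Sum.inl t) {m : ℕ} (hm : m ≤ k*(k+2))
    {x : V ⊕ (ArcT A × Fin k)} (hx : ww m = Sum.inr x) : m < k*(k+2) := by
  rcases lt_or_eq_of_le hm with h | h
  · exact h
  · rw [h, hN] at hx; exact absurd hx (by simp)

/-- forced upward traversal of an arc path, starting from `u''` then `p_{b,0}`. -/
lemma chain_up
    (hinj : ∀ m n, m ≤ k*(k+2) → n ≤ k*(k+2) → ww m = ww n → m = n)
    (hadj : ∀ n, n < k*(k+2) → (SimpleGraph.fromRel (arcPathRel A k)).Adj (ww n) (ww (n+1)))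
    (hN : ww (k*(k+2)) = Sum.inl t)
    {n : ℕ} {u : V} {b : ArcT A} {i0 : Fin k}
    (h0 : ww n = Sum.inr (Sum.inl u)) (hbu : b.val.1 = u)
    (hi0 : (i0 : ℕ) = 0)
    (h1 : ww (n+1) = Sum.inr (Sum.inr (b, i0)))
    (hn1 : n + 1 ≤ k*(k+2)) :
    (∀ jj : ℕ, (hj : jj < k) → n+1+jj ≤ k*(k+2) ∧
        ww (n+1+jj) = Sum.inr (Sum.inr (b, ⟨jj, hj⟩))) ∧
      n+1+k ≤ k*(k+2) ∧ ww (n+1+k) = Sum.inl b.val.2 := by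
  have hk : 1 ≤ k := i0.pos
  have hn : n ≤ k*(k+2) := by omega
  have aux : ∀ jj : ℕ, (hj : jj < k) → n+1+jj ≤ k*(k+2) ∧
      ww (n+1+jj) = Sum.inr (Sum.inr (b, ⟨jj, hj⟩)) := by
    intro jj
    induction jj using Nat.strong_induction_on with
    | _ jj IH =>
      intro hj
      match jj with
      | 0 =>
        refine ⟨hn1, ?_⟩
        rw [h1]; congr 1; congr 1; congr 1; exact Fin.ext hi0
      | jj + 1 =>
        obtain ⟨hle, heq⟩ := IH jj (by omega) (by omega)
        have hmlt : n+1+jj < k*(k+2) := lt_of_inr hN hle heq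
        have hadj' := hadj (n+1+jj) hmlt
        rw [heq] at hadj'
        rcases adj_inner hadj' with ⟨hz, hy⟩ | ⟨hz, hy⟩ | ⟨j, hz | hz, hy⟩
        · -- going back down to u''; impossible
          simp only at hz
          have : jj = 0 := hz
          subst this
          rw [hbu, ← h0] at hy
          have := hinj (n+1+0+1) n (by omega) hn hy
          omega
        · -- i = k-1, but jj+1 < k
          simp only at hz; omega
        · -- forward
          simp only at hz
          have : n+1+jj+1 = n+1+(jj+1) := by omega
          rw [this] at hy
          refine ⟨by omega, ?_⟩
          rw [hy]; congr 3; exact Fin.ext (by simp [hz])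
        · -- backward to (b, jj-1)
          simp only at hz
          obtain ⟨jj2, rfl⟩ : ∃ m, jj = m + 1 := ⟨jj - 1, by omega⟩
          obtain ⟨hle', heq'⟩ := IH jj2 (by omega) (by omega)
          have : Sum.inr (Sum.inr (b, j)) = ww (n+1+jj2) := by
            rw [heq']; congr 3; exact Fin.ext (by simp; omega)
          rw [this] at hy
          have := hinj (n+1+(jj2+1)+1) (n+1+jj2) (by omega) (by omega) hy
          omega
  refine ⟨aux, ?_⟩
  obtain ⟨hle, heq⟩ := aux (k-1) (by omega)
  have hmlt : n+1+(k-1) < k*(k+2) := lt_of_inr hN hle heq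
  have hadj' := hadj _ hmlt
  rw [heq] at hadj'
  have hidx : n+1+(k-1)+1 = n+1+k := by omega
  rcases adj_inner hadj' with ⟨hz, hy⟩ | ⟨hz, hy⟩ | ⟨j, hz | hz, hy⟩
  · -- down to u'' : only possible if k = 1, then it's ww n
    simp only at hz
    have hk1 : k = 1 := by omega
    rw [hbu, ← h0] at hy
    have := hinj (n+1+(k-1)+1) n (by omega) hn hy
    omega
  · rw [hidx] at hy; exact ⟨by omega, hy⟩
  · simp only at hz; omega
  · -- back down to (b, k-2)
    simp only at hz
    have hk2 : 2 ≤ k := by omega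
    obtain ⟨hle', heq'⟩ := aux (k-2) (by omega)
    have : Sum.inr (Sum.inr (b, j)) = ww (n+1+(k-2)) := by
      rw [heq']; congr 3; exact Fin.ext (by simp; omega)
    rw [this] at hy
    have := hinj (n+1+(k-1)+1) (n+1+(k-2)) (by omega) (by omega) hy
    omega

/-- forced downward traversal of an arc path, starting from `v'` then `p_{a,k-1}`. -/
lemma chain_down
    (hinj : ∀ m n, m ≤ k*(k+2) → n ≤ k*(k+2) → ww m = ww n → m = n)
    (hadj : ∀ n, n < k*(k+2) → (SimpleGraph.fromRel (arcPathRel A k)).Adj (ww n) (ww (n+1)))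
    (hN : ww (k*(k+2)) = Sum.inl t)
    {n : ℕ} {v : V} {a : ArcT A} {i0 : Fin k}
    (h0 : ww n = Sum.inl v) (hav : a.val.2 = v)
    (hi0 : (i0 : ℕ) = k - 1)
    (h1 : ww (n+1) = Sum.inr (Sum.inr (a, i0)))
    (hn1 : n + 1 ≤ k*(k+2)) :
    (∀ jj : ℕ, (hj : jj < k) → n+1+jj ≤ k*(k+2) ∧
        ww (n+1+jj) = Sum.inr (Sum.inr (a, ⟨k-1-jj, by omega⟩))) ∧
      n+1+k ≤ k*(k+2) ∧ ww (n+1+k) = Sum.inr (Sum.inl a.val.1) := by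
  have hk : 1 ≤ k := i0.pos
  have hn : n ≤ k*(k+2) := by omega
  have aux : ∀ jj : ℕ, (hj : jj < k) → n+1+jj ≤ k*(k+2) ∧
      ww (n+1+jj) = Sum.inr (Sum.inr (a, ⟨k-1-jj, by omega⟩)) := by
    intro jj
    induction jj using Nat.strong_induction_on with
    | _ jj IH =>
      intro hj
      match jj with
      | 0 =>
        refine ⟨hn1, ?_⟩
        rw [h1]; congr 3; exact Fin.ext (by simp [hi0])
      | jj + 1 =>
        obtain ⟨hle, heq⟩ := IH jj (by omega) (by omega)
        have hmlt : n+1+jj < k*(k+2) := lt_of_inr hN hle heq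
        have hadj' := hadj (n+1+jj) hmlt
        rw [heq] at hadj'
        rcases adj_inner hadj' with ⟨hz, hy⟩ | ⟨hz, hy⟩ | ⟨j, hz | hz, hy⟩
        · -- i = 0 : k-1-jj = 0 impossible since jj+1 < k
          simp only at hz; omega
        · -- i = k-1 : only jj = 0, then y = inl a.2 = ww n
          simp only at hz
          have : jj = 0 := by omega
          subst this
          rw [hav, ← h0] at hy
          have := hinj (n+1+0+1) n (by omega) hn hy
          omega
        · -- j = (k-1-jj)+1 = k-jj : revisit
          simp only at hz
          have hjlt := j.isLt
          obtain ⟨jj2, rfl⟩ : ∃ m, jj = m + 1 := ⟨jj - 1, by omega⟩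
          obtain ⟨hle', heq'⟩ := IH jj2 (by omega) (by omega)
          have : Sum.inr (Sum.inr (a, j)) = ww (n+1+jj2) := by
            rw [heq']; congr 3; exact Fin.ext (by simp; omega)
          rw [this] at hy
          have := hinj (n+1+(jj2+1)+1) (n+1+jj2) (by omega) (by omega) hy
          omega
        · -- j+1 = k-1-jj : forward down
          simp only at hz
          have : n+1+jj+1 = n+1+(jj+1) := by omega
          rw [this] at hy
          refine ⟨by omega, ?_⟩
          rw [hy]; congr 3; exact Fin.ext (by simp; omega)
  refine ⟨aux, ?_⟩
  obtain ⟨hle, heq⟩ := aux (k-1) (by omega)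
  have hmlt : n+1+(k-1) < k*(k+2) := lt_of_inr hN hle heq
  have hadj' := hadj _ hmlt
  rw [heq] at hadj'
  have hidx : n+1+(k-1)+1 = n+1+k := by omega
  rcases adj_inner hadj' with ⟨hz, hy⟩ | ⟨hz, hy⟩ | ⟨j, hz | hz, hy⟩
  · rw [hidx] at hy; exact ⟨by omega, hy⟩
  · -- i = k-1 : only k = 1, then y = inl a.2 = ww n
    simp only at hz
    have hk1 : k = 1 := by omega
    rw [hav, ← h0] at hy
    have := hinj (n+1+(k-1)+1) n (by omega) hn hy
    omega
  · -- j = 1 : revisit (a,1) = ww (n+1+(k-2)), needs k ≥ 2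
    simp only at hz
    have hk2 : 2 ≤ k := by omega
    obtain ⟨hle', heq'⟩ := aux (k-2) (by omega)
    have : Sum.inr (Sum.inr (a, j)) = ww (n+1+(k-2)) := by
      rw [heq']; congr 3; exact Fin.ext (by simp; omega)
    rw [this] at hy
    have := hinj (n+1+(k-1)+1) (n+1+(k-2)) (by omega) (by omega) hy
    omega
  · simp only at hz; omega

end Chains

section Suffix

variable {V : Type} {A : V → V → Prop} {k : ℕ} {t : V} {ww : ℕ → Wt A k}

/-- the path arrived at `v'` (position `i`) by a downward step from `v''`. -/
def Desc (ww : ℕ → Wt A k) (i : ℕ) (v : V) : Prop :=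
  1 ≤ i ∧ ww (i-1) = Sum.inr (Sum.inl v)

/-- from position `i` on, the path is the canonical all-forward image of a directed
path with `U` arcs, ending at `t`. -/
def Canon (A : V → V → Prop) (k : ℕ) (ww : ℕ → Wt A k) (t : V) (i : ℕ) (U : ℕ) : Prop :=
  ∃ u : Fin (U+1) → V,
    u (Fin.last U) = t ∧ k*(k+2) = i + U*(k+2) ∧
    (∀ q : Fin (U+1), ww (i + (q:ℕ)*(k+2)) = Sum.inl (u q)) ∧
    ∀ q : Fin U,
      ww (i + (q:ℕ)*(k+2) + 1) = Sum.inr (Sum.inl (u q.castSucc)) ∧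
      ∃ a : ArcT A, a.val.1 = u q.castSucc ∧ a.val.2 = u q.succ ∧
        ∀ jj : Fin k, ww (i + (q:ℕ)*(k+2) + 2 + (jj:ℕ)) = Sum.inr (Sum.inr (a, jj))

lemma canon_extend {i U : ℕ} {v : V} {b : ArcT A}
    (hb1 : b.val.1 = v)
    (hwv : ww i = Sum.inl v) (h1 : ww (i+1) = Sum.inr (Sum.inl v))
    (hinner : ∀ jj : Fin k, ww (i + 2 + (jj:ℕ)) = Sum.inr (Sum.inr (b, jj)))
    (hend : ww (i + (k+2)) = Sum.inl b.val.2)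
    (hC : Canon A k ww t (i + (k+2)) U) : Canon A k ww t i (U+1) := by
  obtain ⟨u', hlast', hlen', hinl', hblk'⟩ := hC
  have hb2 : b.val.2 = u' 0 := by
    have h := hinl' 0
    simp only [Fin.val_zero, Nat.zero_mul, Nat.add_zero] at h
    rw [h] at hend
    exact (Sum.inl.inj hend).symm
  refine ⟨fun q => if h : (q:ℕ) = 0 then v else u' ⟨(q:ℕ)-1, by have := q.isLt; omega⟩,
    ?_, ?_, ?_, ?_⟩
  · -- last
    dsimp only
    rw [dif_neg (by simp)]
    rw [← hlast']
    exact congrArg u' (Fin.ext (by simp))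
  · -- length
    have e2 : (U+1)*(k+2) = U*(k+2) + (k+2) := by ring
    omega
  · -- inl positions
    intro q
    dsimp only
    rcases Nat.eq_zero_or_pos (q:ℕ) with hq0 | hqpos
    · rw [dif_pos hq0, show i + (q:ℕ)*(k+2) = i by simp [hq0]]
      exact hwv
    · obtain ⟨q1, hq1⟩ : ∃ m, (q:ℕ) = m + 1 := ⟨(q:ℕ)-1, by omega⟩
      have hq1U : q1 < U + 1 := by have := q.isLt; omega
      have h := hinl' ⟨q1, hq1U⟩
      rw [dif_neg (by omega),
        show i + (q:ℕ)*(k+2) = i + (k+2) + (⟨q1, hq1U⟩ : Fin (U+1)) * (k+2) by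
          simp only [Fin.val_mk]; rw [hq1]; ring, h]
      exact congrArg (fun z => Sum.inl (u' z)) (Fin.ext (by simp; omega))
  · -- blocks
    intro q
    dsimp only
    rcases Nat.eq_zero_or_pos (q:ℕ) with hq0 | hqpos
    · have hcs : ((q.castSucc : Fin (U+2)) : ℕ) = 0 := by
        rw [Fin.coe_castSucc]; exact hq0
      have hsc : ((q.succ : Fin (U+2)) : ℕ) = 1 := by
        rw [Fin.val_succ, hq0]
      constructor
      · rw [dif_pos hcs, show i + (q:ℕ)*(k+2) + 1 = i + 1 by simp [hq0]]
        exact h1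
      · refine ⟨b, by rw [dif_pos hcs]; exact hb1, ?_, ?_⟩
        · rw [dif_neg (by omega), hb2]
          refine congrArg u' (Fin.ext ?_)
          simp only [Fin.val_zero]
          show (0:ℕ) = ((q.succ : Fin (U+2)) : ℕ) - 1
          omega
        · intro jj
          rw [show i + (q:ℕ)*(k+2) + 2 + (jj:ℕ) = i + 2 + (jj:ℕ) by simp [hq0]]
          exact hinner jj
    · obtain ⟨q1, hq1⟩ : ∃ m, (q:ℕ) = m + 1 := ⟨(q:ℕ)-1, by omega⟩
      have hq1U : q1 < U := by have := q.isLt; omega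
      have hcs : ((q.castSucc : Fin (U+2)) : ℕ) = (q:ℕ) := by rw [Fin.coe_castSucc]
      have hsc : ((q.succ : Fin (U+2)) : ℕ) = (q:ℕ)+1 := by rw [Fin.val_succ]
      obtain ⟨hA, a', ha'1, ha'2, hjj'⟩ := hblk' ⟨q1, hq1U⟩
      have eidx : ∀ r : ℕ, i + (q:ℕ)*(k+2) + r
          = i + (k+2) + (⟨q1, hq1U⟩ : Fin U) * (k+2) + r := by
        intro r; simp only [Fin.val_mk]; rw [hq1]; ring
      constructor
      · rw [dif_neg (by omega), eidx 1, hA]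
        refine congrArg (fun z => Sum.inr (Sum.inl (u' z))) (Fin.ext ?_)
        rw [Fin.coe_castSucc, Fin.val_mk]
        show q1 = ((q.castSucc : Fin (U+2)) : ℕ) - 1
        omega
      · refine ⟨a', ?_, ?_, ?_⟩
        · rw [ha'1, dif_neg (by omega)]
          refine congrArg u' (Fin.ext ?_)
          rw [Fin.coe_castSucc, Fin.val_mk]
          show q1 = ((q.castSucc : Fin (U+2)) : ℕ) - 1
          omega
        · rw [ha'2, dif_neg (by omega)]
          refine congrArg u' (Fin.ext ?_)
          rw [Fin.val_succ, Fin.val_mk]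
          show q1 + 1 = ((q.succ : Fin (U+2)) : ℕ) - 1
          omega
        · intro jj
          rw [show i + (q:ℕ)*(k+2) + 2 + (jj:ℕ)
              = i + (k+2) + ((⟨q1, hq1U⟩ : Fin U) : ℕ) * (k+2) + 2 + (jj:ℕ) by
            simp only [Fin.val_mk]; rw [hq1]; ring]
          exact hjj' jj

lemma suffix_struct (hk : 1 ≤ k) (hout : ∀ x, ¬ A t x)
    (hinj : ∀ m n, m ≤ k*(k+2) → n ≤ k*(k+2) → ww m = ww n → m = n)
    (hadj : ∀ n, n < k*(k+2) → (SimpleGraph.fromRel (arcPathRel A k)).Adj (ww n) (ww (n+1)))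
    (hN : ww (k*(k+2)) = Sum.inl t) :
    ∀ j i v, i + j = k*(k+2) → ww i = Sum.inl v →
    ∃ U D Vl : ℕ, j = (U+D)*(k+2) + Vl*(2*k+2) ∧
      (Vl = 0 → ¬ Desc ww i v ∧ D = 0 ∧ Canon A k ww t i U) := by
  have hN3 : 3 ≤ k*(k+2) := by nlinarith
  intro j
  induction j using Nat.strong_induction_on with
  | _ j IH =>
    intro i v hij hwv
    rcases Nat.eq_zero_or_pos j with rfl | hjpos
    · -- base case : i = N, v = t
      have hiN : i = k*(k+2) := by omega
      subst hiN
      have hvt : v = t := by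
        rw [hwv] at hN; exact Sum.inl.inj hN
      subst hvt
      refine ⟨0, 0, 0, by ring, fun _ => ⟨?_, rfl, ?_⟩⟩
      · -- ¬ Desc : would need an arc out of v = t
        rintro ⟨h1, h2⟩
        have hadj' := (hadj (k*(k+2) - 2) (by omega)).symm
        have e : k*(k+2) - 2 + 1 = k*(k+2) - 1 := by omega
        rw [e, h2] at hadj'
        rcases adj_inrinl hadj' with h3 | ⟨b, i0, hi0, hb1, h3⟩
        · rw [← hN] at h3
          have := hinj _ _ (by omega) (le_refl _) h3
          omega
        · exact hout b.val.2 (hb1 ▸ b.prop)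
      · -- Canon at the endpoint
        refine ⟨fun _ => v, rfl, by ring, fun q => ?_,
          fun q => absurd q.isLt (by omega)⟩
        have hq : (q : ℕ) = 0 := by have := q.isLt; omega
        rw [hq]; simpa using hwv
    · -- inductive step : i < N
      have hiN : i < k*(k+2) := by omega
      have hadj0 := hadj i hiN
      rw [hwv] at hadj0
      rcases adj_inl hadj0 with h1 | ⟨a, i0, hi0, ha2, h1⟩
      · -- CASE UP : w(i+1) = v''
        have hi1 : i + 1 < k*(k+2) := lt_of_inr hN (by omega) h1
        have hadj1 := hadj (i+1) hi1
        rw [h1] at hadj1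
        rcases adj_inrinl hadj1 with h2 | ⟨b, i0, hi0, hb1, h2⟩
        · -- back to v' : revisit
          rw [← hwv] at h2
          have := hinj _ _ (by omega) (by omega) h2
          omega
        · -- forward along arc b
          obtain ⟨inner, hle, hend⟩ := chain_up hinj hadj hN h1 hb1 hi0 h2 (by omega)
          have e1 : i + 1 + 1 + k = i + (k+2) := by omega
          rw [e1] at hle hend
          have hrec := IH (j - (k+2)) (by omega) (i + (k+2)) b.val.2 (by omega) hend
          obtain ⟨U', D', V', heq, himp⟩ := hrec
          refine ⟨U' + 1, D', V', ?_, fun hV0 => ?_⟩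
          · have e2 : (U'+1+D')*(k+2) = (U'+D')*(k+2) + (k+2) := by ring
            omega
          obtain ⟨hnd', hD0, hcanon'⟩ := himp hV0
          refine ⟨?_, hD0, ?_⟩
          · -- ¬ Desc i v
            rintro ⟨hge, hprev⟩
            rw [← h1] at hprev
            have := hinj _ _ (by omega) (by omega) hprev
            omega
          · -- compose Canon
            have hinner : ∀ jj : Fin k, ww (i + 2 + (jj:ℕ)) = Sum.inr (Sum.inr (b, jj)) := by
              intro jj
              have h := (inner (jj:ℕ) jj.isLt).2
              have e : i + 1 + 1 + (jj:ℕ) = i + 2 + (jj:ℕ) := by omega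
              rw [e] at h
              rw [h]
            exact canon_extend hb1 hwv h1 hinner hend hcanon'
      · -- CASE DOWN : w(i+1) = p_{a,k-1}
        obtain ⟨inner, hle, hend⟩ := chain_down hinj hadj hN hwv ha2 hi0 h1 (by omega)
        have hm2 : i + 1 + k < k*(k+2) := lt_of_inr hN hle hend
        have hadj2 := hadj (i+1+k) hm2
        rw [hend] at hadj2
        rcases adj_inrinl hadj2 with h3 | ⟨b, i0', hi0', hb1, h3⟩
        · -- DOWN segment : recurse in descending mode
          have e : i + 1 + k + 1 = i + (k+2) := by omega
          rw [e] at h3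
          have hrec := IH (j - (k+2)) (by omega) (i + (k+2)) a.val.1 (by omega) h3
          obtain ⟨U', D', V', heq, himp⟩ := hrec
          refine ⟨U', D' + 1, V', ?_, fun hV0 => ?_⟩
          · have e2 : (U'+(D'+1))*(k+2) = (U'+D')*(k+2) + (k+2) := by ring
            omega
          obtain ⟨hnd', _, _⟩ := himp hV0
          exact absurd ⟨by omega, by rw [show i+(k+2)-1 = i+1+k by omega]; exact hend⟩ hnd'
        · -- VALLEY : forced up, then recurse
          obtain ⟨inner2, hle2, hend2⟩ := chain_up hinj hadj hN hend hb1 hi0' h3 (by omega)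
          have e : i + 1 + k + 1 + k = i + (2*k+2) := by omega
          rw [e] at hle2 hend2
          have hrec := IH (j - (2*k+2)) (by omega) (i + (2*k+2)) b.val.2 (by omega) hend2
          obtain ⟨U', D', V', heq, himp⟩ := hrec
          refine ⟨U', D', V' + 1, ?_, fun hV0 => absurd hV0 (by omega)⟩
          have e2 : (V'+1)*(2*k+2) = V'*(2*k+2) + (2*k+2) := by ring
          omega

end Suffix

section CanonF

variable {V : Type} {A : V → V → Prop} {k : ℕ}

/-- canonical undirected path associated with a directed path -/
def canonF (u : Fin (k+1) → V) (harc : ∀ q : Fin k, A (u q.castSucc) (u q.succ)) :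
    Fin (k*(k+2)+1) → Wt A k :=
  fun n =>
    if hqk : (n:ℕ) / (k+2) < k then
      if h0 : (n:ℕ) % (k+2) = 0 then Sum.inl (u ⟨(n:ℕ)/(k+2), by omega⟩)
      else if h1 : (n:ℕ) % (k+2) = 1 then Sum.inr (Sum.inl (u ⟨(n:ℕ)/(k+2), by omega⟩))
      else Sum.inr (Sum.inr (⟨(u ⟨(n:ℕ)/(k+2), by omega⟩, u ⟨(n:ℕ)/(k+2) + 1, by omega⟩),
          harc ⟨(n:ℕ)/(k+2), hqk⟩⟩,
        ⟨(n:ℕ) % (k+2) - 2, by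
          have := Nat.mod_lt (n:ℕ) (show 0 < k+2 by omega); omega⟩))
    else Sum.inl (u (Fin.last k))

lemma canonF_cases (hk : 1 ≤ k) (u : Fin (k+1) → V)
    (harc : ∀ q : Fin k, A (u q.castSucc) (u q.succ)) (m : Fin (k*(k+2)+1)) :
    ∃ (q r : ℕ) (_ : q = (m:ℕ)/(k+2)) (_ : r = (m:ℕ)%(k+2))
      (_ : (m:ℕ) = q*(k+2) + r) (_ : r < k+2)
      (_ : q < k ∨ (q = k ∧ r = 0 ∧ (m:ℕ) = k*(k+2))),
      ((r = 0 ∧ ∃ h : q < k+1, canonF u harc m = Sum.inl (u ⟨q, h⟩)) ∨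
       (r = 1 ∧ ∃ h : q < k, canonF u harc m = Sum.inr (Sum.inl (u ⟨q, by omega⟩))) ∨
       (2 ≤ r ∧ ∃ h : q < k, canonF u harc m = Sum.inr (Sum.inr
         (⟨(u ⟨q, by omega⟩, u ⟨q+1, by omega⟩), harc ⟨q, h⟩⟩, ⟨r-2, by omega⟩)))) := by
  have hmlt : (m:ℕ) < k*(k+2)+1 := m.isLt
  have hdm : (m:ℕ) = (m:ℕ)/(k+2)*(k+2) + (m:ℕ)%(k+2) :=
    (Nat.div_add_mod' _ _).symm
  have hmod : (m:ℕ)%(k+2) < k+2 := Nat.mod_lt _ (by omega)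
  have hqk' : (m:ℕ)/(k+2) < k ∨ ((m:ℕ)/(k+2) = k ∧ (m:ℕ)%(k+2) = 0 ∧ (m:ℕ) = k*(k+2)) := by
    by_cases hq : (m:ℕ)/(k+2) < k
    · exact Or.inl hq
    · have hge : k ≤ (m:ℕ)/(k+2) := by omega
      have : k*(k+2) ≤ (m:ℕ) := (Nat.le_div_iff_mul_le (by omega)).mp hge
      have hmN : (m:ℕ) = k*(k+2) := by omega
      refine Or.inr ⟨?_, ?_, hmN⟩
      · rw [hmN, Nat.mul_div_cancel _ (by omega : 0 < k+2)]
      · rw [hmN, Nat.mul_mod_left]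
  refine ⟨(m:ℕ)/(k+2), (m:ℕ)%(k+2), rfl, rfl, hdm, hmod, hqk', ?_⟩
  by_cases hq : (m:ℕ)/(k+2) < k
  · by_cases hr0 : (m:ℕ)%(k+2) = 0
    · refine Or.inl ⟨hr0, by omega, ?_⟩
      simp only [canonF]
      rw [dif_pos hq, dif_pos hr0]
    · by_cases hr1 : (m:ℕ)%(k+2) = 1
      · refine Or.inr (Or.inl ⟨hr1, hq, ?_⟩)
        simp only [canonF]
        rw [dif_pos hq, dif_neg hr0, dif_pos hr1]
      · refine Or.inr (Or.inr ⟨by omega, hq, ?_⟩)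
        simp only [canonF]
        rw [dif_pos hq, dif_neg hr0, dif_neg hr1]
  · obtain ⟨hq1, hq2, hq3⟩ : (m:ℕ)/(k+2) = k ∧ (m:ℕ)%(k+2) = 0 ∧ (m:ℕ) = k*(k+2) := by
      rcases hqk' with h | h
      · exact absurd h hq
      · exact h
    refine Or.inl ⟨hq2, by omega, ?_⟩
    simp only [canonF]
    rw [dif_neg hq]
    exact congrArg (fun z => Sum.inl (u z)) (Fin.ext (by simp [hq1]))

/-- value at the node positions `q*(k+2)` -/
lemma canonF_node (hk : 1 ≤ k) (u : Fin (k+1) → V)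
    (harc : ∀ q : Fin k, A (u q.castSucc) (u q.succ)) (q : Fin (k+1)) :
    canonF u harc ⟨(q:ℕ)*(k+2), by
      have : (q:ℕ) ≤ k := by omega
      have := Nat.mul_le_mul_right (k+2) this
      omega⟩ = Sum.inl (u q) := by
  have hq : (q:ℕ) ≤ k := by omega
  have hdiv : ((q:ℕ)*(k+2))/(k+2) = (q:ℕ) := Nat.mul_div_cancel _ (by omega)
  have hmod : ((q:ℕ)*(k+2))%(k+2) = 0 := Nat.mul_mod_left _ _
  by_cases hqk : (q:ℕ) < k
  · simp only [canonF]
    rw [dif_pos (by simpa [hdiv] using hqk), dif_pos (by simpa using hmod)]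
    exact congrArg (fun z => Sum.inl (u z)) (Fin.ext (by simpa using hdiv))
  · simp only [canonF]
    rw [dif_neg (by simp [hdiv]; omega)]
    exact congrArg (fun z => Sum.inl (u z)) (Fin.ext (by simp [Fin.last]; omega))

end CanonF

section CanonF2

variable {V : Type} {A : V → V → Prop} {k : ℕ}

lemma canonF_inj (hk : 1 ≤ k) (u : Fin (k+1) → V)
    (harc : ∀ q : Fin k, A (u q.castSucc) (u q.succ)) (hu : Function.Injective u) :
    Function.Injective (canonF u harc) := by
  intro m n h
  obtain ⟨qm, rm, hqm, hrm, hm, hrmlt, hqmk, hcm⟩ := canonF_cases hk u harc m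
  obtain ⟨qn, rn, hqn, hrn, hn, hrnlt, hqnk, hcn⟩ := canonF_cases hk u harc n
  rcases hcm with ⟨hr0, hb, hv⟩ | ⟨hr1, hb, hv⟩ | ⟨hr2, hb, hv⟩ <;>
    rcases hcn with ⟨hr0', hb', hv'⟩ | ⟨hr1', hb', hv'⟩ | ⟨hr2', hb', hv'⟩ <;>
    rw [hv, hv'] at h <;>
    simp only [Sum.inl.injEq, Sum.inr.injEq, Prod.mk.injEq, Subtype.mk.injEq,
      Fin.mk.injEq, reduceCtorEq] at h
  · have hq : qm = qn := congrArg Fin.val (hu h)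
    subst hq
    exact Fin.ext (by omega)
  · have hq : qm = qn := congrArg Fin.val (hu h)
    subst hq
    exact Fin.ext (by omega)
  · obtain ⟨⟨h1, -⟩, h2⟩ := h
    have hq : qm = qn := congrArg Fin.val (hu h1)
    subst hq
    exact Fin.ext (by omega)

lemma canonF_adj (hk : 1 ≤ k) (u : Fin (k+1) → V)
    (harc : ∀ q : Fin k, A (u q.castSucc) (u q.succ)) (i : Fin (k*(k+2))) :
    (SimpleGraph.fromRel (arcPathRel A k)).Adj
      (canonF u harc i.castSucc) (canonF u harc i.succ) := by
  have hilt : (i:ℕ) < k*(k+2) := i.isLt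
  have hv1 : ((i.castSucc : Fin (k*(k+2)+1)) : ℕ) = (i:ℕ) := rfl
  have hv2 : ((i.succ : Fin (k*(k+2)+1)) : ℕ) = (i:ℕ)+1 := rfl
  obtain ⟨qm, rm, hqm, hrm, hm, hrmlt, hqmk, hcm⟩ := canonF_cases hk u harc i.castSucc
  obtain ⟨qn, rn, hqn, hrn, hn, hrnlt, hqnk, hcn⟩ := canonF_cases hk u harc i.succ
  rw [hv1] at hm
  rw [hv2] at hn
  have hqmlt : qm < k := by
    rcases hqmk with h | ⟨h1, h2, h3⟩
    · exact h
    · rw [hv1] at h3; omega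
  have hstep : (rm < k+1 ∧ qn = qm ∧ rn = rm+1) ∨ (rm = k+1 ∧ qn = qm+1 ∧ rn = 0) := by
    by_cases hrmk : rm < k+1
    · left
      refine ⟨hrmk, ?_⟩
      have := (Nat.div_mod_unique (show 0 < k+2 by omega)).mpr
        (show rm+1 + (k+2)*qm = (i:ℕ)+1 ∧ rm+1 < k+2 by
          constructor
          · rw [Nat.mul_comm (k+2) qm]; omega
          · omega)
      rw [hv2] at hqn hrn
      omega
    · right
      have hrmK : rm = k+1 := by omega
      refine ⟨hrmK, ?_⟩
      have := (Nat.div_mod_unique (show 0 < k+2 by omega)).mpr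
        (show 0 + (k+2)*(qm+1) = (i:ℕ)+1 ∧ 0 < k+2 by
          constructor
          · have e : (k+2)*(qm+1) = qm*(k+2) + (k+2) := by ring
            omega
          · omega)
      rw [hv2] at hqn hrn
      omega
  rcases hcm with ⟨hr0, hb, hv⟩ | ⟨hr1, hb, hv⟩ | ⟨hr2, hb, hv⟩ <;>
    rcases hcn with ⟨hr0', hb', hv'⟩ | ⟨hr1', hb', hv'⟩ | ⟨hr2', hb', hv'⟩ <;>
    rw [hv, hv'] <;>
    rw [adj_iff]
  -- 0,0 : impossible
  · exfalso; omega
  -- 0,1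
  · refine ⟨by simp, Or.inl ?_⟩
    show u ⟨qm, hb⟩ = u ⟨qn, by omega⟩
    exact congrArg u (Fin.ext (by simp; omega))
  -- 0,2 : impossible
  · exfalso; omega
  -- 1,0 : impossible
  · exfalso; omega
  -- 1,1 : impossible
  · exfalso; omega
  -- 1,2
  · refine ⟨by simp, Or.inl ?_⟩
    refine ⟨?_, ?_⟩
    · show u ⟨qn, by omega⟩ = u ⟨qm, by omega⟩
      exact congrArg u (Fin.ext (by simp; omega))
    · show rn - 2 = 0
      omega
  -- 2,0 : wrap-around
  · refine ⟨by simp, Or.inl ?_⟩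
    refine ⟨?_, ?_⟩
    · show u ⟨qm+1, by omega⟩ = u ⟨qn, hb'⟩
      exact congrArg u (Fin.ext (by simp; omega))
    · show rm - 2 = k - 1
      omega
  -- 2,1 : impossible
  · exfalso; omega
  -- 2,2
  · have hq : qn = qm := by omega
    subst hq
    refine ⟨?_, Or.inl ?_⟩
    · simp only [ne_eq, Sum.inr.injEq, Prod.mk.injEq]
      rintro ⟨-, hj⟩
      have := congrArg Fin.val hj
      simp only at this
      omega
    · refine ⟨?_, ?_⟩
      · rfl
      · show (rm - 2) + 1 = rn - 2
        omega

end CanonF2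

section Node

variable {V : Type} {A : V → V → Prop} {k : ℕ}

lemma canonF_node' (hk : 1 ≤ k) (u : Fin (k+1) → V)
    (harc : ∀ q : Fin k, A (u q.castSucc) (u q.succ)) (m : Fin (k*(k+2)+1))
    (q : Fin (k+1)) (hm : (m:ℕ) = (q:ℕ)*(k+2)) :
    canonF u harc m = Sum.inl (u q) := by
  obtain ⟨qd, rd, hqd, hrd, hmd, hrlt, hqk, hc⟩ := canonF_cases hk u harc m
  have hdiv : (m:ℕ)/(k+2) = (q:ℕ) := by rw [hm]; exact Nat.mul_div_cancel _ (by omega)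
  have hmod : (m:ℕ)%(k+2) = 0 := by rw [hm]; exact Nat.mul_mod_left _ _
  have hq : qd = (q:ℕ) := by omega
  have hr : rd = 0 := by omega
  rcases hc with ⟨h0, hb, hv⟩ | ⟨h1, -⟩ | ⟨h2, -⟩
  · rw [hv]
    exact congrArg (fun z => Sum.inl (u z)) (Fin.ext (by simp [hq]))
  · omega
  · omega

end Node

end Stmt13

open Stmt13 in
/-- for a finite loopless directed graph in which `t` has out-degree `0` and
`s ≠ t`, the number of directed `s,t`-paths of length `k ≥ 1` equals the number of paths of
length `k(k+2)` between `s'` and `t'` in the undirected graph `G'` obtained by splitting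
every vertex into an adjacent pair `v', v''` and replacing every arc `(u,v)` by a path of
length `k+1` from `u''` to `v'`. -/
theorem stmt_13 {V : Type} [Fintype V] (A : V → V → Prop)
    (hloop : ∀ v, ¬ A v v) (s t : V) (hst : s ≠ t) (k : ℕ) (hk : 1 ≤ k)
    (hout : ∀ x, ¬ A t x) :
    Nat.card {w : Fin (k + 1) → V // Function.Injective w ∧
      w 0 = s ∧ w (Fin.last k) = t ∧
      ∀ i : Fin k, A (w i.castSucc) (w i.succ)} =
    Nat.card {w : Fin (k * (k + 2) + 1) →
        (V ⊕ (V ⊕ ({p : V × V // A p.1 p.2} × Fin k))) // Function.Injective w ∧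
      w 0 = Sum.inl s ∧ w (Fin.last (k * (k + 2))) = Sum.inl t ∧
      ∀ i : Fin (k * (k + 2)),
        (SimpleGraph.fromRel (arcPathRel A k)).Adj (w i.castSucc) (w i.succ)} := by
  classical
  refine Nat.card_eq_of_bijective
    (fun d => ⟨canonF d.1 d.2.2.2.2,
      canonF_inj hk d.1 d.2.2.2.2 d.2.1,
      by rw [canonF_node' hk d.1 d.2.2.2.2 0 0 (by simp), d.2.2.1],
      by rw [canonF_node' hk d.1 d.2.2.2.2 (Fin.last _) (Fin.last k) (by simp), d.2.2.2.1],
      fun i => canonF_adj hk d.1 d.2.2.2.2 i⟩) ⟨?_, ?_⟩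
  · -- injectivity
    intro d1 d2 h
    have hval := congrArg Subtype.val h
    simp only at hval
    apply Subtype.ext
    funext q
    have hb : (q:ℕ)*(k+2) < k*(k+2)+1 := by
      have hq : (q:ℕ) ≤ k := by omega
      have := Nat.mul_le_mul_right (k+2) hq
      omega
    have h1 := canonF_node' hk d1.1 d1.2.2.2.2 ⟨(q:ℕ)*(k+2), hb⟩ q rfl
    have h2 := canonF_node' hk d2.1 d2.2.2.2.2 ⟨(q:ℕ)*(k+2), hb⟩ q rfl
    have h3 := congrFun hval ⟨(q:ℕ)*(k+2), hb⟩
    rw [h1, h2] at h3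
    exact Sum.inl.inj h3
  · -- surjectivity
    rintro ⟨w, hwinj, hw0, hwN, hwadj⟩
    -- extend to ℕ
    set ww : ℕ → Wt A k := fun n => w ⟨min n (k*(k+2)), Nat.lt_succ_of_le (Nat.min_le_right _ _)⟩ with hwwdef
    have hww : ∀ n (hn : n ≤ k*(k+2)), ww n = w ⟨n, by omega⟩ := by
      intro n hn
      exact congrArg w (Fin.ext (by simpa using Nat.min_eq_left hn))
    have hwww : ∀ m : Fin (k*(k+2)+1), ww (m:ℕ) = w m := by
      intro m
      rw [hww _ (by omega)]
    have hinj' : ∀ m n, m ≤ k*(k+2) → n ≤ k*(k+2) → ww m = ww n → m = n := by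
      intro m n hm hn h
      rw [hww m hm, hww n hn] at h
      exact congrArg Fin.val (hwinj h)
    have hadj' : ∀ n, n < k*(k+2) →
        (SimpleGraph.fromRel (arcPathRel A k)).Adj (ww n) (ww (n+1)) := by
      intro n hn
      rw [hww n (by omega), hww (n+1) (by omega)]
      exact hwadj ⟨n, hn⟩
    have hN' : ww (k*(k+2)) = Sum.inl t := by rw [hww _ le_rfl]; exact hwN
    have h0' : ww 0 = Sum.inl s := by rw [hww 0 (by omega)]; exact hw0
    obtain ⟨U, D, Vl, heq, himp⟩ :=
      suffix_struct hk hout hinj' hadj' hN' (k*(k+2)) 0 s (by omega) h0'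
    have hV0 : Vl = 0 := by
      by_contra hV
      have hdvd : (k+2) ∣ Vl*(2*k+2) := by
        have h1 : (k+2) ∣ (U+D)*(k+2) := dvd_mul_left _ _
        have h2 : (k+2) ∣ k*(k+2) := dvd_mul_left _ _
        have h3 : Vl*(2*k+2) = k*(k+2) - (U+D)*(k+2) := by omega
        rw [h3]; exact Nat.dvd_sub h2 h1
      have hco : Nat.Coprime (k+2) (k+1) :=
        (Nat.coprime_self_add_left (m := k+1) (n := 1)).mpr (Nat.coprime_one_left _)
      have hdvd2 : (k+2) ∣ (2*Vl) := by
        have h4 : Vl*(2*k+2) = (2*Vl)*(k+1) := by ring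
        rw [h4] at hdvd
        exact hco.dvd_of_dvd_mul_right hdvd
      have h5 : k+2 ≤ 2*Vl := Nat.le_of_dvd (by omega) hdvd2
      have h6 : (k+2)*(k+1) ≤ (2*Vl)*(k+1) := Nat.mul_le_mul_right _ h5
      have h7 : (2*Vl)*(k+1) = Vl*(2*k+2) := by ring
      have h8 : (k+2)*(k+1) = k*(k+2) + (k+2) := by ring
      omega
    obtain ⟨-, hD0, u, hulast, hulen, huinl, hublk⟩ := himp hV0
    subst hD0
    have hUk : U = k := by
      have e : (U+0)*(k+2) = U*(k+2) := by ring
      have e2 : U*(k+2) = k*(k+2) := by omega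
      exact Nat.eq_of_mul_eq_mul_right (by omega) e2
    have hUk' : k = U := hUk.symm
    subst hUk'
    have harcu : ∀ q : Fin k, A (u q.castSucc) (u q.succ) := by
      intro q
      obtain ⟨-, a, ha1, ha2, -⟩ := hublk q
      rw [← ha1, ← ha2]
      exact a.prop
    have hu0 : u 0 = s := by
      have h := huinl 0
      simp only [Fin.val_zero, Nat.zero_mul, Nat.add_zero] at h
      rw [h0'] at h
      exact (Sum.inl.inj h).symm
    have huinj : Function.Injective u := by
      intro a b hab
      have h1 := huinl a
      rw [hab] at h1
      have h2 := huinl b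
      have h3 := h1.trans h2.symm
      have hble : ∀ c : Fin (k+1), 0 + (c:ℕ)*(k+2) ≤ k*(k+2) := by
        intro c
        have hc : (c:ℕ) ≤ k := by omega
        have := Nat.mul_le_mul_right (k+2) hc
        omega
      have := hinj' _ _ (hble a) (hble b) h3
      have hval : (a:ℕ) = (b:ℕ) := by
        have := Nat.eq_of_mul_eq_mul_right (show 0 < k+2 by omega) (by omega :
          (a:ℕ)*(k+2) = (b:ℕ)*(k+2))
        exact this
      exact Fin.ext hval
    refine ⟨⟨u, huinj, hu0, hulast, harcu⟩, ?_⟩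
    apply Subtype.ext
    simp only
    funext m
    have hmlt := m.isLt
    obtain ⟨q, r, hqd, hrd, hm, hrlt, hqk, hc⟩ := canonF_cases hk u harcu m
    rcases hc with ⟨hr0, hb, hv⟩ | ⟨hr1, hb, hv⟩ | ⟨hr2, hb, hv⟩
    · rw [hv]
      have hbl := huinl ⟨q, hb⟩
      rw [hww _ (by simp only [Fin.val_mk]; omega)] at hbl
      exact hbl.symm.trans (congrArg w (Fin.ext (show 0 + q*(k+2) = (m:ℕ) by omega)))
    · rw [hv]
      have hbl := (hublk ⟨q, hb⟩).1
      rw [hww _ (by simp only [Fin.val_mk]; omega)] at hbl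
      exact hbl.symm.trans (congrArg w (Fin.ext (show 0 + q*(k+2) + 1 = (m:ℕ) by omega)))
    · obtain ⟨-, a, ha1, ha2, hjj⟩ := hublk ⟨q, hb⟩
      have haeq : (⟨(u ⟨q, by omega⟩, u ⟨q+1, by omega⟩), harcu ⟨q, hb⟩⟩ : ArcT A) = a := by
        apply Subtype.ext
        apply Prod.ext
        · exact ha1.symm
        · exact ha2.symm
      have hjx := hjj ⟨r-2, by omega⟩
      rw [hww _ (by simp only [Fin.val_mk, Fin.val_mk]; omega), ← haeq] at hjx
      rw [hv]
      exact hjx.symm.trans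
        (congrArg w (Fin.ext (show 0 + q*(k+2) + 2 + (r-2) = (m:ℕ) by omega)))
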